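/- Let X be a partially ordered set, i : X → X an antitone map, and + a partial binary operation defined exactly on D₊ := {(x,y) ∈ X × X | y ≤ i(x)}, which is order-preserving in both coordinates (if (x,y) ∈ D₊, x' ≤ x and y' ≤ y then x' + y' ≤ x + y) and expanding (x ≤ x + y for all (x,y) ∈ D₊). Assume further that for every x ∈ X the set {x + w | w ≤ i(x)} is totally ordered, and that for every z ≥ x there exists k ≤ i(x) such that for all w ≤ i(x): x + w ≤ z if and only if w ≤ k. Then for all lower sets u, v₁, v₂ ⊆ X: f₊(u, v₁) ∩ f₊(u, v₂) = f₊(u, v₁ ∪ v₂). -/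
import Mathlib


def fplus {X : Type*} [Preorder X] (i : X → X) (p : X → X → X) (u v : Set X) : Set X :=
  {x | ∃ w, w ≤ i x ∧ w ∉ v ∧ p x w ∈ u}

theorem stmt11 {X : Type*} [PartialOrder X]
    (i : X → X) (hi : Antitone i) (p : X → X → X)
    (hmono : ∀ x y x' y' : X, y ≤ i x → x' ≤ x → y' ≤ y → p x' y' ≤ p x y)
    (hexp : ∀ x y : X, y ≤ i x → x ≤ p x y)
    (hchain : ∀ x : X, IsChain (· ≤ ·) {z : X | ∃ w, w ≤ i x ∧ z = p x w})
    (hadj : ∀ x z : X, x ≤ z → ∃ k, k ≤ i x ∧ ∀ w, w ≤ i x → (p x w ≤ z ↔ w ≤ k))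
    (u v₁ v₂ : Set X) (hu : IsLowerSet u) (hv₁ : IsLowerSet v₁) (hv₂ : IsLowerSet v₂) :
    fplus i p u v₁ ∩ fplus i p u v₂ = fplus i p u (v₁ ∪ v₂) := by
  ext x
  constructor
  · rintro ⟨⟨w₁, hw₁, hnv₁, hu₁⟩, ⟨w₂, hw₂, hnv₂, hu₂⟩⟩
    have hmem₁ : p x w₁ ∈ {z : X | ∃ w, w ≤ i x ∧ z = p x w} := ⟨w₁, hw₁, rfl⟩
    have hmem₂ : p x w₂ ∈ {z : X | ∃ w, w ≤ i x ∧ z = p x w} := ⟨w₂, hw₂, rfl⟩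
    have htot : p x w₁ ≤ p x w₂ ∨ p x w₂ ≤ p x w₁ := by
      rcases eq_or_ne (p x w₁) (p x w₂) with he | hne
      · exact Or.inl he.le
      · exact hchain x hmem₁ hmem₂ hne
    rcases htot with h | h
    · obtain ⟨k, hk, hkspec⟩ := hadj x (p x w₂) (hexp x w₂ hw₂)
      refine ⟨k, hk, ?_, hu ((hkspec k hk).mpr le_rfl) hu₂⟩
      rintro (hh | hh)
      · exact hnv₁ (hv₁ ((hkspec w₁ hw₁).mp h) hh)
      · exact hnv₂ (hv₂ ((hkspec w₂ hw₂).mp le_rfl) hh)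
    · obtain ⟨k, hk, hkspec⟩ := hadj x (p x w₁) (hexp x w₁ hw₁)
      refine ⟨k, hk, ?_, hu ((hkspec k hk).mpr le_rfl) hu₁⟩
      rintro (hh | hh)
      · exact hnv₁ (hv₁ ((hkspec w₁ hw₁).mp le_rfl) hh)
      · exact hnv₂ (hv₂ ((hkspec w₂ hw₂).mp h) hh)
  · rintro ⟨w, hw, hnv, huw⟩
    exact ⟨⟨w, hw, fun h => hnv (Or.inl h), huw⟩, ⟨w, hw, fun h => hnv (Or.inr h), huw⟩⟩
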